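/- Let ψ : 𝕋ⁿ → ℂ be smooth with |ψ|² = ρ > 0 everywhere. Then the Madelung dispersive-term identities hold: (1/4) ∇·(ρ ∇²(log ρ)) = (1/2) ρ ∇(Δ√ρ / √ρ) = (1/4) Δ∇ρ − ∇·(∇√ρ ⊗ ∇√ρ), where ∇² denotes the Hessian. -/

import Mathlib

/-- Partial derivative `∂ᵢ f` of a real function on `ℝⁿ`. -/
noncomputable def pd {n : ℕ} (f : (Fin n → ℝ) → ℝ) (i : Fin n) (x : Fin n → ℝ) : ℝ :=
  fderiv ℝ f x (Pi.single i 1)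

variable {n : ℕ} {f g : (Fin n → ℝ) → ℝ} {x : Fin n → ℝ}

lemma contDiff_pd (hf : ContDiff ℝ (⊤ : ℕ∞) f) (i : Fin n) : ContDiff ℝ (⊤ : ℕ∞) (pd f i) :=
  (hf.fderiv_right (by simp)).clm_apply contDiff_const

lemma pd_add (hf : DifferentiableAt ℝ f x) (hg : DifferentiableAt ℝ g x) (i : Fin n) :
    pd (fun y => f y + g y) i x = pd f i x + pd g i x := by
  unfold pd; rw [fderiv_fun_add hf hg]; simp

lemma pd_sub (hf : DifferentiableAt ℝ f x) (hg : DifferentiableAt ℝ g x) (i : Fin n) :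
    pd (fun y => f y - g y) i x = pd f i x - pd g i x := by
  unfold pd; rw [fderiv_fun_sub hf hg]; simp

lemma pd_mul (hf : DifferentiableAt ℝ f x) (hg : DifferentiableAt ℝ g x) (i : Fin n) :
    pd (fun y => f y * g y) i x = pd f i x * g x + f x * pd g i x := by
  unfold pd; rw [fderiv_fun_mul hf hg]; simp; ring

lemma pd_const_mul (hf : DifferentiableAt ℝ f x) (c : ℝ) (i : Fin n) :
    pd (fun y => c * f y) i x = c * pd f i x := by
  unfold pd; rw [fderiv_const_mul hf]; simp

lemma pd_inv (hg : DifferentiableAt ℝ g x) (hgx : g x ≠ 0) (i : Fin n) :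
    pd (fun y => (g y)⁻¹) i x = -(pd g i x) / (g x)^2 := by
  have h := (hasDerivAt_inv hgx).comp_hasFDerivAt x hg.hasFDerivAt
  unfold pd; rw [show (fun y => (g y)⁻¹) = (fun t : ℝ => t⁻¹) ∘ g from rfl, h.fderiv]
  simp; ring

lemma pd_div (hf : DifferentiableAt ℝ f x) (hg : DifferentiableAt ℝ g x) (hgx : g x ≠ 0) (i : Fin n) :
    pd (fun y => f y / g y) i x = (pd f i x * g x - f x * pd g i x) / (g x)^2 := by
  simp only [div_eq_mul_inv]
  rw [pd_mul (g := fun y => (g y)⁻¹) hf (hg.inv hgx), pd_inv hg hgx]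
  field_simp; ring

lemma pd_sum (F : Fin n → (Fin n → ℝ) → ℝ)
    (hF : ∀ k, DifferentiableAt ℝ (F k) x) (i : Fin n) :
    pd (fun y => ∑ k, F k y) i x = ∑ k, pd (F k) i x := by
  unfold pd; rw [fderiv_fun_sum (fun k _ => hF k)]; simp

lemma pd_log (hf : DifferentiableAt ℝ f x) (hfx : 0 < f x) (i : Fin n) :
    pd (fun y => Real.log (f y)) i x = pd f i x / f x := by
  have h := (Real.hasDerivAt_log hfx.ne').comp_hasFDerivAt x hf.hasFDerivAt
  unfold pd; rw [show (fun y => Real.log (f y)) = Real.log ∘ f from rfl, h.fderiv]; simp; ring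

lemma pd_comm (hf : ContDiff ℝ (⊤ : ℕ∞) f) (a b : Fin n) (x : Fin n → ℝ) :
    pd (pd f a) b x = pd (pd f b) a x := by
  have hd : DifferentiableAt ℝ (fderiv ℝ f) x :=
    ((hf.fderiv_right (m := 1) (WithTop.coe_le_coe.mpr le_top)).differentiable one_ne_zero) x
  have key : ∀ c d : Fin n, pd (pd f c) d x
      = fderiv ℝ (fderiv ℝ f) x (Pi.single d 1) (Pi.single c 1) := by
    intro c d
    unfold pd
    rw [fderiv_clm_apply hd (differentiableAt_const _)]
    simp
  rw [key a b, key b a]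
  exact (hf.contDiffAt.isSymmSndFDerivAt (by norm_num; exact WithTop.coe_le_coe.mpr le_top)) _ _

theorem aux {n : ℕ} (r s : (Fin n → ℝ) → ℝ) (hr : ContDiff ℝ (⊤ : ℕ∞) r)
    (hs : ContDiff ℝ (⊤ : ℕ∞) s) (hspos : ∀ y, 0 < s y) (hrs : ∀ y, r y = s y * s y)
    (x : Fin n → ℝ) (j : Fin n) :
      ((1/4 : ℝ) * ∑ i, pd (fun y => r y *
          pd (pd (fun z => Real.log (r z)) j) i y) i x =
        (1/2 : ℝ) * r x *
          pd (fun y => (∑ i, pd (pd (fun z => Real.sqrt (r z)) i) i y) /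
            Real.sqrt (r y)) j x) ∧
      ((1/2 : ℝ) * r x *
          pd (fun y => (∑ i, pd (pd (fun z => Real.sqrt (r z)) i) i y) /
            Real.sqrt (r y)) j x =
        (1/4 : ℝ) * (∑ i, pd (pd (pd r j) i) i x) -
          ∑ i, pd (fun y => pd (fun z => Real.sqrt (r z)) i y *
            pd (fun z => Real.sqrt (r z)) j y) i x) := by
  have hrpos : ∀ y, 0 < r y := fun y => (hrs y) ▸ mul_pos (hspos y) (hspos y)
  have hs0 : ∀ y, s y ≠ 0 := fun y => (hspos y).ne'
  have hr0 : ∀ y, r y ≠ 0 := fun y => (hrpos y).ne'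
  have hsqrt : ∀ y, Real.sqrt (r y) = s y := by
    intro y; rw [hrs y]; exact Real.sqrt_mul_self (hspos y).le
  have ds : Differentiable ℝ s := hs.differentiable (by simp)
  have dr : Differentiable ℝ r := hr.differentiable (by simp)
  have ds1 : ∀ a, Differentiable ℝ (pd s a) := fun a => (contDiff_pd hs a).differentiable (by simp)
  have ds2 : ∀ a b, Differentiable ℝ (pd (pd s a) b) :=
    fun a b => (contDiff_pd (contDiff_pd hs a) b).differentiable (by simp)
  have dr1 : ∀ a, Differentiable ℝ (pd r a) := fun a => (contDiff_pd hr a).differentiable (by simp)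
  -- first derivative of r in terms of s
  have hdr : ∀ a, pd r a = fun y => pd s a y * s y + s y * pd s a y := by
    intro a; funext y
    have hre : r = fun y => s y * s y := funext hrs
    rw [hre, pd_mul (ds y) (ds y)]
  -- log derivative
  have hL : pd (fun z => Real.log (r z)) j = fun y => 2 * pd s j y / s y := by
    funext y
    rw [pd_log (dr y) (hrpos y) j]
    simp only [hdr]
    rw [hrs y, div_eq_div_iff (mul_ne_zero (hs0 y) (hs0 y)) (hs0 y)]
    ring
  -- G function for expression 1
  have hG : ∀ i : Fin n, (fun y => r y * pd (pd (fun z => Real.log (r z)) j) i y)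
      = fun y => 2 * (pd (pd s j) i y * s y) - 2 * (pd s j y * pd s i y) := by
    intro i; funext y
    simp only [hL]
    rw [pd_div ((ds1 j y).const_mul 2) (ds y) (hs0 y) i,
        pd_const_mul (ds1 j y) 2 i, hrs y,
        mul_div_assoc', div_eq_iff (pow_ne_zero 2 (hs0 y))]
    ring
  -- canonical form
  set canon : ℝ := ∑ i, ((1/2 : ℝ) * (s x * pd (pd (pd s j) i) i x)
      - (1/2 : ℝ) * (pd s j x * pd (pd s i) i x)) with hcanon
  -- Expression 1
  have key1 : (1/4 : ℝ) * ∑ i, pd (fun y => r y *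
      pd (pd (fun z => Real.log (r z)) j) i y) i x = canon := by
    simp only [hG, hcanon]
    rw [Finset.mul_sum]
    refine Finset.sum_congr rfl (fun i _ => ?_)
    rw [pd_sub (f := fun y => 2 * (pd (pd s j) i y * s y)) (g := fun y => 2 * (pd s j y * pd s i y)) (((ds2 j i).mul ds x).const_mul 2) (((ds1 j).mul (ds1 i) x).const_mul 2) i,
        pd_const_mul (f := fun y => pd (pd s j) i y * s y) ((ds2 j i).mul ds x) 2 i, pd_const_mul (f := fun y => pd s j y * pd s i y) ((ds1 j).mul (ds1 i) x) 2 i,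
        pd_mul (ds2 j i x) (ds x) i, pd_mul (ds1 j x) (ds1 i x) i]
    ring
  -- Expression 2
  have key2 : (1/2 : ℝ) * r x *
      pd (fun y => (∑ i, pd (pd (fun z => Real.sqrt (r z)) i) i y) /
        Real.sqrt (r y)) j x = canon := by
    simp only [hsqrt]
    have hnum : DifferentiableAt ℝ (fun y => ∑ i, pd (pd s i) i y) x := by
      apply DifferentiableAt.fun_sum
      intro k _
      exact ds2 k k x
    rw [pd_div hnum (ds x) (hs0 x) j,
        pd_sum _ (fun k => ds2 k k x) j]
    have hswap : ∀ i : Fin n, pd (pd (pd s i) i) j x = pd (pd (pd s j) i) i x := by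
      intro i
      rw [pd_comm (contDiff_pd hs i) i j x]
      congr 1
      funext y
      exact pd_comm hs i j y
    have hc2 : canon = (1/2 : ℝ) * (s x * ∑ i, pd (pd (pd s j) i) i x)
        - (1/2 : ℝ) * (pd s j x * ∑ i, pd (pd s i) i x) := by
      rw [hcanon, Finset.sum_sub_distrib, ← Finset.mul_sum, ← Finset.mul_sum,
        ← Finset.mul_sum, ← Finset.mul_sum]
    simp only [hswap]
    rw [hc2, hrs x, mul_div_assoc', div_eq_iff (pow_ne_zero 2 (hs0 x))]
    ring
  -- Expression 3
  have hd2r : ∀ i : Fin n, pd (pd r j) i = fun y =>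
      (pd (pd s j) i y * s y + pd s j y * pd s i y)
      + (pd s i y * pd s j y + s y * pd (pd s j) i y) := by
    intro i; funext y
    simp only [hdr]
    rw [pd_add (f := fun y => pd s j y * s y) (g := fun y => s y * pd s j y) ((ds1 j).mul ds y) (ds.mul (ds1 j) y) i,
        pd_mul (ds1 j y) (ds y) i, pd_mul (ds y) (ds1 j y) i]
  have key3 : (1/4 : ℝ) * (∑ i, pd (pd (pd r j) i) i x) -
      ∑ i, pd (fun y => pd (fun z => Real.sqrt (r z)) i y *
        pd (fun z => Real.sqrt (r z)) j y) i x = canon := by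
    simp only [hsqrt, hd2r, hcanon]
    rw [Finset.mul_sum, ← Finset.sum_sub_distrib]
    refine Finset.sum_congr rfl (fun i _ => ?_)
    rw [pd_mul (ds1 i x) (ds1 j x) i]
    rw [pd_add (f := fun y => pd (pd s j) i y * s y + pd s j y * pd s i y) (g := fun y => pd s i y * pd s j y + s y * pd (pd s j) i y) (((ds2 j i).mul ds).add ((ds1 j).mul (ds1 i)) x)
        (((ds1 i).mul (ds1 j)).add (ds.mul (ds2 j i)) x) i,
        pd_add (f := fun y => pd (pd s j) i y * s y) (g := fun y => pd s j y * pd s i y) ((ds2 j i).mul ds x) ((ds1 j).mul (ds1 i) x) i,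
        pd_add (f := fun y => pd s i y * pd s j y) (g := fun y => s y * pd (pd s j) i y) ((ds1 i).mul (ds1 j) x) (ds.mul (ds2 j i) x) i,
        pd_mul (ds2 j i x) (ds x) i, pd_mul (ds1 j x) (ds1 i x) i,
        pd_mul (ds1 i x) (ds1 j x) i, pd_mul (ds x) (ds2 j i x) i]
    ring
  exact ⟨key1.trans key2.symm, key2.trans key3.symm⟩



/-- Madelung dispersive-term identities: if `ψ` is smooth with `ρ = |ψ|² > 0`, then
`(1/4) ∇·(ρ ∇²(log ρ)) = (1/2) ρ ∇(Δ√ρ/√ρ) = (1/4) Δ∇ρ − ∇·(∇√ρ ⊗ ∇√ρ)`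
componentwise (the `j`-th component of each vector field, at each point). -/
theorem stmt_9 {n : ℕ} (ψ : (Fin n → ℝ) → ℂ) (hψ : ContDiff ℝ (⊤ : ℕ∞) ψ)
    (ρ : (Fin n → ℝ) → ℝ) (hρψ : ∀ x, ρ x = ‖ψ x‖ ^ 2) (hρpos : ∀ x, 0 < ρ x) :
    ∀ (x : Fin n → ℝ) (j : Fin n),
      ((1/4 : ℝ) * ∑ i, pd (fun y => ρ y *
          pd (pd (fun z => Real.log (ρ z)) j) i y) i x =
        (1/2 : ℝ) * ρ x *
          pd (fun y => (∑ i, pd (pd (fun z => Real.sqrt (ρ z)) i) i y) /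
            Real.sqrt (ρ y)) j x) ∧
      ((1/2 : ℝ) * ρ x *
          pd (fun y => (∑ i, pd (pd (fun z => Real.sqrt (ρ z)) i) i y) /
            Real.sqrt (ρ y)) j x =
        (1/4 : ℝ) * (∑ i, pd (pd (pd ρ j) i) i x) -
          ∑ i, pd (fun y => pd (fun z => Real.sqrt (ρ z)) i y *
            pd (fun z => Real.sqrt (ρ z)) j y) i x) := by
  have h1 : ρ = fun x => (ψ x).re * (ψ x).re + (ψ x).im * (ψ x).im := by
    funext x
    rw [hρψ x, ← Complex.normSq_eq_norm_sq, Complex.normSq_apply]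
  have hre : ContDiff ℝ (⊤ : ℕ∞) fun x => (ψ x).re := Complex.reCLM.contDiff.comp hψ
  have him : ContDiff ℝ (⊤ : ℕ∞) fun x => (ψ x).im := Complex.imCLM.contDiff.comp hψ
  have hρ : ContDiff ℝ (⊤ : ℕ∞) ρ := by rw [h1]; exact (hre.mul hre).add (him.mul him)
  have hs : ContDiff ℝ (⊤ : ℕ∞) (fun z => Real.sqrt (ρ z)) := by
    rw [contDiff_iff_contDiffAt]
    intro y
    exact (Real.contDiffAt_sqrt (hρpos y).ne').comp y hρ.contDiffAt
  have hspos : ∀ y, 0 < Real.sqrt (ρ y) := fun y => Real.sqrt_pos.2 (hρpos y)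
  have hrs : ∀ y, ρ y = Real.sqrt (ρ y) * Real.sqrt (ρ y) :=
    fun y => (Real.mul_self_sqrt (hρpos y).le).symm
  exact fun x j => aux ρ (fun z => Real.sqrt (ρ z)) hρ hs hspos hrs x j
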